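/- arXiv:1405.6266 — 6 statements merged into one kernel-verified Lean document; each statement's English description precedes it below -/
import Mathlib

section
/- Let g ≥ 2 be an integer base and let (a_n)_{n≥1} be a sequence of positive integers. Suppose that (i) m = o(∑_{n=1}^m L(a_n)) as m → ∞, (ii) m · max_{1≤n≤m} L(a_n) = O(∑_{n=1}^m L(a_n)) as m → ∞, and (iii) for every ε > 0 and every k ∈ ℕ, the number of n ≤ m for which a_n is not (ε,k)-normal to base g is o(m) as m → ∞. Then the infinite base-g digit sequence obtained by concatenating the strings \bar{a_1}, \bar{a_2}, \bar{a_3}, … is normal to base g. -/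
open Filter Asymptotics

/-- Number of (possibly overlapping) occurrences of the string `σ` as a contiguous
substring of the string `w` (strings are lists of base-`g` digits). -/
def nu (w σ : List ℕ) : ℕ :=
  ((Finset.range w.length).filter (fun i => σ <+: w.drop i)).card

/-- The string of base-`g` digits of `a`, most significant digit first. -/
def digs (g a : ℕ) : List ℕ :=
  (Nat.digits g a).reverse

/-- `L(a) = ⌊log_g a⌋ + 1`, the number of base-`g` digits of `a ≥ 1`. -/
def Lg (g a : ℕ) : ℕ :=
  Nat.log g a + 1

/-- A positive integer `a` is `(ε,k)`-normal to base `g` if every string `σ` of `k`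
base-`g` digits satisfies `|ν(a,σ)/L(a) − g^{−k}| ≤ ε`. -/
def EKNormalInt (g : ℕ) (ε : ℝ) (k : ℕ) (a : ℕ) : Prop :=
  ∀ σ : List ℕ, σ.length = k → (∀ d ∈ σ, d < g) →
    |(nu (digs g a) σ : ℝ) / (Lg g a : ℝ) - 1 / (g : ℝ) ^ k| ≤ ε

/-- The `N`-th digit (indexed from `0`) of the infinite base-`g` digit sequence obtained by
concatenating the digit strings of `a 1`, `a 2`, `a 3`, …  (When `g ≥ 2` and each `a n ≥ 1`,
the first `N+1` blocks have total length `> N`, so the index is valid.) -/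
def concatDigit (g : ℕ) (a : ℕ → ℕ) (N : ℕ) : ℕ :=
  (((List.range (N + 1)).map (fun n => digs g (a (n + 1)))).flatten).getD N 0

/-- An infinite sequence `x` of base-`g` digits is normal to base `g` if for every nonempty
string `σ` of base-`g` digits, the frequency of occurrences of `σ` among the first `N` digits
tends to `g^{-|σ|}`. -/
def IsNormalSeq (g : ℕ) (x : ℕ → ℕ) : Prop :=
  ∀ σ : List ℕ, σ ≠ [] → (∀ d ∈ σ, d < g) →
    Tendsto (fun N : ℕ => (nu ((List.range N).map x) σ : ℝ) / (N : ℝ)) atTop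
      (nhds (1 / (g : ℝ) ^ σ.length))

/-!
Cut the concatenated sequence after its `N`-th digit; this falls inside the block of some
`a_{m+1}`. Up to the at most `|σ| (m+1)` occurrences of `σ` straddling a block boundary and
the at most `max_{n ≤ m+1} L(a_n)` occurrences inside the last, partial block, the count of
`σ` among the first `N` digits is `∑_{n ≤ m+1} ν(a_n, σ)`, and `N` is `∑_{n ≤ m+1} L(a_n)`
up to the same maximum. By (i) and (ii) both errors are `o(∑_{n ≤ m+1} L(a_n))`.
Every `(ε,k)`-normal block contributes `(g^{-k} ± ε) L(a_n)` occurrences, and by (iii) and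
(ii) the others contribute at most `o(m) · max_{n ≤ m} L(a_n) = o(∑_{n ≤ m} L(a_n))`, so
`∑_{n ≤ m} ν(a_n, σ) = g^{-k} ∑_{n ≤ m} L(a_n) + o(∑_{n ≤ m} L(a_n))`.
-/

open Topology

lemma nu_nil (σ : List ℕ) : nu [] σ = 0 := rfl

lemma nu_cons (x : ℕ) (w σ : List ℕ) :
    nu (x :: w) σ = nu w σ + if σ <+: x :: w then 1 else 0 := by
  rw [nu, nu, Finset.card_filter, Finset.card_filter, List.length_cons, Finset.sum_range_succ']
  simp

lemma nu_le_length (w σ : List ℕ) : nu w σ ≤ w.length :=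
  (Finset.card_filter_le _ _).trans_eq (Finset.card_range _)

lemma nu_add_nu_le_nu_append (u v σ : List ℕ) : nu u σ + nu v σ ≤ nu (u ++ v) σ := by
  induction u with
  | nil => simp [nu_nil]
  | cons x u ih =>
    rw [List.cons_append, nu_cons, nu_cons]
    have : σ <+: x :: u → σ <+: x :: (u ++ v) := fun h => h.trans (List.prefix_append _ v)
    split_ifs <;> simp_all <;> omega

/-- Only occurrences starting in the last `|σ|` positions of `u` can straddle the junction. -/
lemma nu_append_le (u v σ : List ℕ) :
    nu (u ++ v) σ ≤ nu u σ + nu v σ + min σ.length u.length := by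
  induction u with
  | nil => simp [nu_nil]
  | cons x u ih =>
    rw [List.cons_append, nu_cons, nu_cons, List.length_cons]
    have : σ <+: x :: (u ++ v) → σ.length ≤ u.length + 1 → σ <+: x :: u := fun h hl =>
      List.prefix_of_prefix_length_le h (List.prefix_append (x :: u) v) hl
    split_ifs <;> simp_all <;> omega

lemma nu_le_of_prefix {u w : List ℕ} (σ : List ℕ) (h : u <+: w) : nu u σ ≤ nu w σ := by
  obtain ⟨v, rfl⟩ := h
  exact (Nat.le_add_right _ _).trans (nu_add_nu_le_nu_append u v σ)

lemma tendsto_div_of_isLittleO {α : Type*} {l : Filter α} {u v s : α → ℝ} {c : ℝ}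
    (hu : (fun x => u x - c * s x) =o[l] s) (hv : (fun x => v x - s x) =o[l] s)
    (hs : ∀ᶠ x in l, s x ≠ 0) : Tendsto (fun x => u x / v x) l (𝓝 c) := by
  have tendsto_div_s : ∀ {w : α → ℝ} {d : ℝ}, (fun x => w x - d * s x) =o[l] s →
      Tendsto (fun x => w x / s x) l (𝓝 d) := by
    intro w d h
    have := h.tendsto_div_nhds_zero.add_const d
    rw [zero_add] at this
    refine this.congr' ?_
    filter_upwards [hs] with x hx
    field_simp
    ring
  have := (tendsto_div_s hu).div (tendsto_div_s (d := 1) (by simpa only [one_mul] using hv)) one_ne_zero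
  rw [div_one] at this
  refine this.congr' ?_
  filter_upwards [hs] with x hx
  exact div_div_div_cancel_right₀ hx _ _

lemma length_digs_le {g : ℕ} (hg : 2 ≤ g) (b : ℕ) : (digs g b).length ≤ Lg g b := by
  rcases eq_or_ne b 0 with rfl | hb
  · simp [digs]
  · rw [digs, List.length_reverse, Nat.length_digits _ _ hg hb, Lg]

section Blocks

variable (g : ℕ) (a : ℕ → ℕ)

def blockWord (m : ℕ) : List ℕ :=
  ((List.range m).map fun n => digs g (a (n + 1))).flatten

def blockEnd (m : ℕ) : ℕ :=
  ∑ n ∈ Finset.Icc 1 m, Lg g (a n)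

def maxBlockLen (m : ℕ) : ℕ :=
  (Finset.Icc 1 m).sup fun n => Lg g (a n)

def nuBlocks (σ : List ℕ) (m : ℕ) : ℕ :=
  ∑ n ∈ Finset.Icc 1 m, nu (digs g (a n)) σ

lemma blockWord_succ (m : ℕ) : blockWord g a (m + 1) = blockWord g a m ++ digs g (a (m + 1)) := by
  simp [blockWord, List.range_succ]

lemma blockWord_prefix_of_le {m m' : ℕ} (h : m ≤ m') : blockWord g a m <+: blockWord g a m' := by
  induction h with
  | refl => exact List.prefix_refl _
  | step _ ih => exact ih.trans (by rw [blockWord_succ]; exact List.prefix_append _ _)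

lemma blockEnd_succ (m : ℕ) : blockEnd g a (m + 1) = blockEnd g a m + Lg g (a (m + 1)) :=
  Finset.sum_Icc_succ_top (Nat.le_add_left 1 m) _

lemma nuBlocks_succ (σ : List ℕ) (m : ℕ) :
    nuBlocks g a σ (m + 1) = nuBlocks g a σ m + nu (digs g (a (m + 1))) σ :=
  Finset.sum_Icc_succ_top (Nat.le_add_left 1 m) _

lemma le_blockEnd (m : ℕ) : m ≤ blockEnd g a m := by
  simpa [blockEnd] using Finset.card_nsmul_le_sum (Finset.Icc 1 m) (fun n => Lg g (a n)) 1
    fun n _ => Nat.le_add_left 1 _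

lemma blockEnd_mono : Monotone (blockEnd g a) := fun _ _ h =>
  Finset.sum_le_sum_of_subset (Finset.Icc_subset_Icc_right h)

lemma Lg_le_maxBlockLen {n m : ℕ} (h1 : 1 ≤ n) (h2 : n ≤ m) : Lg g (a n) ≤ maxBlockLen g a m :=
  Finset.le_sup (f := fun n => Lg g (a n)) (Finset.mem_Icc.2 ⟨h1, h2⟩)

lemma length_blockWord (hg : 2 ≤ g) (ha : ∀ n, 1 ≤ n → 1 ≤ a n) (m : ℕ) :
    (blockWord g a m).length = blockEnd g a m := by
  induction m with
  | zero => rfl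
  | succ m ih =>
    rw [blockWord_succ, List.length_append, ih, blockEnd_succ, digs, List.length_reverse,
      Nat.length_digits _ _ hg (by have := ha (m + 1); omega), Lg]

lemma nuBlocks_le_nu_blockWord (σ : List ℕ) (m : ℕ) :
    nuBlocks g a σ m ≤ nu (blockWord g a m) σ := by
  induction m with
  | zero => exact Nat.zero_le _
  | succ m ih =>
    rw [nuBlocks_succ, blockWord_succ]
    exact (Nat.add_le_add_right ih _).trans (nu_add_nu_le_nu_append _ _ σ)

lemma nu_blockWord_le (σ : List ℕ) (m : ℕ) :
    nu (blockWord g a m) σ ≤ nuBlocks g a σ m + σ.length * m := by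
  induction m with
  | zero => exact Nat.zero_le _
  | succ m ih =>
    rw [nuBlocks_succ, blockWord_succ]
    have := nu_append_le (blockWord g a m) (digs g (a (m + 1))) σ
    rw [Nat.mul_succ]
    omega

lemma exists_le_blockEnd_succ (N : ℕ) : ∃ m, N ≤ blockEnd g a (m + 1) :=
  ⟨N, (Nat.le_succ N).trans (le_blockEnd g a (N + 1))⟩

/-- The first `N` digits of the concatenation end inside the block of `a (blockIndex N + 1)`. -/
def blockIndex (N : ℕ) : ℕ :=
  Nat.find (exists_le_blockEnd_succ g a N)

lemma le_blockEnd_blockIndex_succ (N : ℕ) : N ≤ blockEnd g a (blockIndex g a N + 1) :=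
  Nat.find_spec (exists_le_blockEnd_succ g a N)

lemma blockEnd_blockIndex_le (N : ℕ) : blockEnd g a (blockIndex g a N) ≤ N := by
  rcases h : blockIndex g a N with _ | m
  · exact Nat.zero_le _
  · have := Nat.find_min (exists_le_blockEnd_succ g a N)
      (show m < blockIndex g a N by omega)
    omega

lemma tendsto_blockIndex : Tendsto (blockIndex g a) atTop atTop := by
  refine tendsto_atTop_atTop.2 fun b => ⟨blockEnd g a b + 1, fun N hN => ?_⟩
  by_contra! h
  have := (le_blockEnd_blockIndex_succ g a N).trans (blockEnd_mono g a h)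
  omega

lemma map_concatDigit_range_eq_take (hg : 2 ≤ g) (ha : ∀ n, 1 ≤ n → 1 ≤ a n) {N m : ℕ}
    (h : N ≤ blockEnd g a m) :
    (List.range N).map (concatDigit g a) = (blockWord g a m).take N := by
  have hlen := length_blockWord g a hg ha
  refine List.ext_getElem (by simp [hlen, h]) fun i hi _ => ?_
  have hiN : i < N := by simpa using hi
  have hi₁ : i < (blockWord g a (i + 1)).length :=
    (hlen (i + 1)).symm ▸ le_blockEnd g a (i + 1)
  have hi₂ : i < (blockWord g a m).length := (hlen m).symm ▸ hiN.trans_le h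
  rw [List.getElem_map, List.getElem_range, List.getElem_take]
  change (blockWord g a (i + 1)).getD i 0 = _
  rw [List.getD_eq_getElem _ _ hi₁]
  rcases le_total (i + 1) m with hm | hm
  · exact (blockWord_prefix_of_le g a hm).getElem hi₁
  · exact ((blockWord_prefix_of_le g a hm).getElem hi₂).symm

section Sandwich

variable (hg : 2 ≤ g) (ha : ∀ n, 1 ≤ n → 1 ≤ a n) (σ : List ℕ) (N : ℕ)
include hg ha

lemma nuBlocks_blockIndex_le :
    nuBlocks g a σ (blockIndex g a N) ≤ nu ((List.range N).map (concatDigit g a)) σ := by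
  rw [map_concatDigit_range_eq_take g a hg ha (le_blockEnd_blockIndex_succ g a N)]
  refine (nuBlocks_le_nu_blockWord g a σ _).trans (nu_le_of_prefix σ ?_)
  rw [List.prefix_take_iff, length_blockWord g a hg ha]
  exact ⟨blockWord_prefix_of_le g a (Nat.le_succ _), blockEnd_blockIndex_le g a N⟩

lemma nu_concatDigit_le :
    nu ((List.range N).map (concatDigit g a)) σ ≤
      nuBlocks g a σ (blockIndex g a N + 1) + σ.length * (blockIndex g a N + 1) := by
  rw [map_concatDigit_range_eq_take g a hg ha (le_blockEnd_blockIndex_succ g a N)]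
  exact (nu_le_of_prefix σ (List.take_prefix _ _)).trans (nu_blockWord_le g a σ _)

lemma abs_nu_concatDigit_sub_le :
    |(nu ((List.range N).map (concatDigit g a)) σ : ℝ) - nuBlocks g a σ (blockIndex g a N + 1)|
      ≤ σ.length * (blockIndex g a N + 1 : ℕ) + maxBlockLen g a (blockIndex g a N + 1) := by
  set m := blockIndex g a N
  have hlo := nuBlocks_blockIndex_le g a hg ha σ N
  have hhi := nu_concatDigit_le g a hg ha σ N
  have hlast : nu (digs g (a (m + 1))) σ ≤ maxBlockLen g a (m + 1) :=
    (nu_le_length _ σ).trans <| (length_digs_le hg _).trans <|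
      Lg_le_maxBlockLen g a (Nat.le_add_left 1 m) le_rfl
  rw [nuBlocks_succ] at hhi ⊢
  rify at hlo hhi hlast
  push_cast
  rw [abs_sub_le_iff]
  constructor <;> linarith [show (0 : ℝ) ≤ σ.length * (m + 1) by positivity]

end Sandwich

lemma abs_natCast_sub_blockEnd_le (N : ℕ) :
    |(N : ℝ) - blockEnd g a (blockIndex g a N + 1)| ≤ maxBlockLen g a (blockIndex g a N + 1) := by
  set m := blockIndex g a N
  have hlo := blockEnd_blockIndex_le g a N
  have hhi := le_blockEnd_blockIndex_succ g a N
  have hlast := Lg_le_maxBlockLen g a (Nat.le_add_left 1 m) le_rfl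
  rw [blockEnd_succ] at hhi ⊢
  rify at hlo hhi hlast
  push_cast
  rw [abs_sub_le_iff]
  constructor <;> linarith

lemma natCast_blockEnd (m : ℕ) :
    (blockEnd g a m : ℝ) = ∑ n ∈ Finset.Icc 1 m, (Lg g (a n) : ℝ) :=
  Nat.cast_sum _ _

end Blocks

section Frequencies

variable {g : ℕ} {σ : List ℕ}

lemma abs_nu_digs_sub_le_Lg (hg : 2 ≤ g) (b : ℕ) :
    |(nu (digs g b) σ : ℝ) - 1 / (g : ℝ) ^ σ.length * Lg g b| ≤ Lg g b := by
  have hν : (nu (digs g b) σ : ℝ) ≤ Lg g b := by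
    exact_mod_cast (nu_le_length _ σ).trans (length_digs_le hg b)
  have hc : 1 / (g : ℝ) ^ σ.length ≤ 1 :=
    div_le_one_of_le₀ (one_le_pow₀ (by exact_mod_cast (by omega : 1 ≤ g))) (by positivity)
  have hcL : 1 / (g : ℝ) ^ σ.length * Lg g b ≤ Lg g b :=
    mul_le_of_le_one_left (by positivity) hc
  rw [abs_sub_le_iff]
  constructor <;> linarith [show (0 : ℝ) ≤ 1 / (g : ℝ) ^ σ.length * Lg g b by positivity,
    (Nat.cast_nonneg _ : (0 : ℝ) ≤ nu (digs g b) σ)]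

lemma abs_nu_digs_sub_le_of_EKNormalInt {ε : ℝ} {b : ℕ} (hσ : ∀ d ∈ σ, d < g)
    (hb : EKNormalInt g ε σ.length b) :
    |(nu (digs g b) σ : ℝ) - 1 / (g : ℝ) ^ σ.length * Lg g b| ≤ ε * Lg g b := by
  have hL : (0 : ℝ) < Lg g b := Nat.cast_pos.2 (Nat.succ_pos _)
  calc |(nu (digs g b) σ : ℝ) - 1 / (g : ℝ) ^ σ.length * Lg g b|
      = |(nu (digs g b) σ : ℝ) / Lg g b - 1 / (g : ℝ) ^ σ.length| * Lg g b := by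
        rw [← abs_of_pos hL, ← abs_mul, abs_of_pos hL, sub_mul, div_mul_cancel₀ _ hL.ne']
    _ ≤ ε * Lg g b := mul_le_mul_of_nonneg_right (hb σ rfl hσ) hL.le

variable {a : ℕ → ℕ}

open scoped Classical in
lemma abs_nuBlocks_sub_le (hg : 2 ≤ g) (hσ : ∀ d ∈ σ, d < g) {ε : ℝ} (hε : 0 ≤ ε) (m : ℕ) :
    |(nuBlocks g a σ m : ℝ) - 1 / (g : ℝ) ^ σ.length * blockEnd g a m|
      ≤ ε * blockEnd g a m
        + ((Finset.Icc 1 m).filter fun n => ¬ EKNormalInt g ε σ.length (a n)).card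
          * maxBlockLen g a m := by
  set c := 1 / (g : ℝ) ^ σ.length
  calc |(nuBlocks g a σ m : ℝ) - c * blockEnd g a m|
      = |∑ n ∈ Finset.Icc 1 m, ((nu (digs g (a n)) σ : ℝ) - c * Lg g (a n))| := by
        rw [nuBlocks, natCast_blockEnd g a, Finset.mul_sum]
        push_cast
        rw [← Finset.sum_sub_distrib]
    _ ≤ ∑ n ∈ Finset.Icc 1 m, |(nu (digs g (a n)) σ : ℝ) - c * Lg g (a n)| :=
        Finset.abs_sum_le_sum_abs _ _
    _ ≤ ∑ n ∈ Finset.Icc 1 m, (ε * Lg g (a n)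
          + if ¬ EKNormalInt g ε σ.length (a n) then (maxBlockLen g a m : ℝ) else 0) := by
        refine Finset.sum_le_sum fun n hn => ?_
        obtain ⟨hn1, hnm⟩ := Finset.mem_Icc.1 hn
        split_ifs with hbad
        · rw [add_zero]
          exact abs_nu_digs_sub_le_of_EKNormalInt hσ hbad
        · have hL : (Lg g (a n) : ℝ) ≤ maxBlockLen g a m := by
            exact_mod_cast Lg_le_maxBlockLen g a hn1 hnm
          have := abs_nu_digs_sub_le_Lg (σ := σ) hg (a n)
          linarith [show (0 : ℝ) ≤ ε * Lg g (a n) by positivity]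
    _ = _ := by
        rw [Finset.sum_add_distrib, ← Finset.mul_sum, ← Finset.sum_filter, Finset.sum_const,
          nsmul_eq_mul, natCast_blockEnd g a]

lemma isLittleO_maxBlockLen
    (h2 : (fun m : ℕ => (m : ℝ) * maxBlockLen g a m) =O[atTop] (fun m => (blockEnd g a m : ℝ))) :
    (fun m => (maxBlockLen g a m : ℝ)) =o[atTop] (fun m => (blockEnd g a m : ℝ)) := by
  have h1m : (fun _ => (1 : ℝ)) =o[atTop] (fun m : ℕ => (m : ℝ)) :=
    isLittleO_one_left_iff ℝ |>.2 <| by simpa using tendsto_natCast_atTop_atTop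
  simpa only [one_mul] using (h1m.mul_isBigO (isBigO_refl _ _)).trans_isBigO h2

open scoped Classical in
lemma isLittleO_nuBlocks_sub (hg : 2 ≤ g) (hσ : ∀ d ∈ σ, d < g)
    (h2 : (fun m : ℕ => (m : ℝ) * maxBlockLen g a m) =O[atTop] (fun m => (blockEnd g a m : ℝ)))
    (h3 : ∀ ε : ℝ, 0 < ε →
      (fun m : ℕ => (((Finset.Icc 1 m).filter fun n => ¬ EKNormalInt g ε σ.length (a n)).card : ℝ))
        =o[atTop] (fun m : ℕ => (m : ℝ))) :
    (fun m => (nuBlocks g a σ m : ℝ) - 1 / (g : ℝ) ^ σ.length * blockEnd g a m)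
      =o[atTop] (fun m => (blockEnd g a m : ℝ)) := by
  refine isLittleO_iff.2 fun δ hδ => ?_
  have hbad := ((h3 (δ / 2) (half_pos hδ)).mul_isBigO (isBigO_refl _ _)).trans_isBigO h2
  filter_upwards [isLittleO_iff.1 hbad (half_pos hδ)] with m hm
  have hS : (0 : ℝ) ≤ blockEnd g a m := Nat.cast_nonneg _
  rw [Real.norm_of_nonneg (by positivity), Real.norm_of_nonneg hS] at hm
  rw [Real.norm_eq_abs, Real.norm_of_nonneg hS]
  linarith [abs_nuBlocks_sub_le (a := a) hg hσ (half_pos hδ).le m]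

end Frequencies

open scoped Classical in
theorem combinatorial_method (g : ℕ) (hg : 2 ≤ g) (a : ℕ → ℕ)
    (ha : ∀ n, 1 ≤ n → 1 ≤ a n)
    (h1 : (fun m : ℕ => (m : ℝ)) =o[atTop]
      (fun m : ℕ => ∑ n ∈ Finset.Icc 1 m, (Lg g (a n) : ℝ)))
    (h2 : (fun m : ℕ => (m : ℝ) * (((Finset.Icc 1 m).sup fun n => Lg g (a n) : ℕ) : ℝ))
      =O[atTop] (fun m : ℕ => ∑ n ∈ Finset.Icc 1 m, (Lg g (a n) : ℝ)))
    (h3 : ∀ ε : ℝ, 0 < ε → ∀ k : ℕ,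
      (fun m : ℕ =>
          (((Finset.Icc 1 m).filter fun n => ¬ EKNormalInt g ε k (a n)).card : ℝ))
        =o[atTop] (fun m : ℕ => (m : ℝ))) :
    IsNormalSeq g (concatDigit g a) := by
  intro σ _ hσ
  simp only [← natCast_blockEnd g a] at h1 h2
  set m := fun N => blockIndex g a N + 1
  have hm : Tendsto m atTop atTop := (tendsto_add_atTop_nat 1).comp (tendsto_blockIndex g a)
  have hmax := (isLittleO_maxBlockLen h2).comp_tendsto hm
  have herr := ((h1.const_mul_left (σ.length : ℝ)).add (isLittleO_maxBlockLen h2)).comp_tendsto hm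
  have hmain := (isLittleO_nuBlocks_sub hg hσ h2 fun ε hε => h3 ε hε σ.length).comp_tendsto hm
  refine tendsto_div_of_isLittleO (s := fun N => (blockEnd g a (m N) : ℝ)) ?_ ?_ ?_
  · have hcount :
        (fun N => (nu ((List.range N).map (concatDigit g a)) σ : ℝ) - nuBlocks g a σ (m N))
          =O[atTop] (fun N => (σ.length : ℝ) * (m N : ℕ) + maxBlockLen g a (m N)) :=
      isBigO_of_le _ fun N => (abs_nu_concatDigit_sub_le g a hg ha σ N).trans (le_abs_self _)
    exact ((hcount.trans_isLittleO herr).add hmain).congr_left fun N => by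
      simp only [Function.comp_apply]; ring
  · exact (isBigO_of_le atTop fun N => (abs_natCast_sub_blockEnd_le g a N).trans
      (le_abs_self _)).trans_isLittleO hmax
  · filter_upwards [eventually_ge_atTop 1] with N hN
    exact Nat.cast_ne_zero.2 (Nat.pos_iff_ne_zero.1 (hN.trans (le_blockEnd_blockIndex_succ g a N)))
end

section
/- Fix an integer base g ≥ 2, a real ε > 0, and k ∈ ℕ. There exists δ' = δ'(ε,k) > 0 such that for all sufficiently large ℓ, the number of strings w of length ℓ over the digit alphabet {0, 1, …, g−1} (including strings starting with 0) that are not (ε,k)-normal is at most g^{ℓ(1−δ')}. -/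
/-!
Split the `ℓ + 1 - k` starting positions of length-`k` blocks into the `k` residue classes
modulo `k`. Blocks starting in the same class are disjoint, so for a uniformly random string
the number of occurrences of a fixed `σ` among them is binomial with parameter `g^{-k}`, and
its moment generating function is computed exactly by counting. A Chernoff bound then shows
that at most `C g^ℓ e^{-cℓ/k}` strings deviate by more than `ε/2` in a given class, and a
union bound over the `g^k` blocks `σ` and the `k` classes gives `g^{ℓ(1 - δ')}` for large `ℓ`;
the boundary positions cost only `k ≤ εℓ/2` occurrences.
-/

open Filter

/-- A string `w` over `{0, …, g−1}` is `(ε,k)`-normal if every string `σ` of `k`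
base-`g` digits satisfies `|ν(w,σ)/|w| − g^{−k}| ≤ ε`. -/
def EKNormalStr (g : ℕ) (ε : ℝ) (k : ℕ) (w : List ℕ) : Prop :=
  ∀ σ : List ℕ, σ.length = k → (∀ d ∈ σ, d < g) →
    |(nu w σ : ℝ) / (w.length : ℝ) - 1 / (g : ℝ) ^ k| ≤ ε

open Finset Real

theorem Fintype.sum_comp_of_injective {ι κ β M : Type*} [Fintype ι] [Fintype κ] [Fintype β]
    [DecidableEq ι] [DecidableEq κ] [AddCommMonoid M] {e : κ → ι} (he : Function.Injective e)
    (F : (κ → β) → M) :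
    ∑ w : ι → β, F (w ∘ e) = (Fintype.card β ^ (Fintype.card ι - Fintype.card κ)) • ∑ v, F v := by
  classical
  let E : (ι → β) ≃ (κ → β) × ({i // i ∉ Set.range e} → β) :=
    (Equiv.piEquivPiSubtypeProd (· ∈ Set.range e) fun _ => β).trans
      ((Equiv.arrowCongr (Equiv.ofInjective e he).symm (Equiv.refl β)).prodCongr (Equiv.refl _))
  have hE : ∀ w, (E w).1 = w ∘ e := fun w => funext fun x => by
    simp [E, Equiv.piEquivPiSubtypeProd]
  calc ∑ w, F (w ∘ e) = ∑ w, F (E w).1 := by simp only [hE]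
    _ = ∑ x : (κ → β) × ({i // i ∉ Set.range e} → β), F x.1 := E.sum_comp fun x => F x.1
    _ = _ := by
      rw [Fintype.sum_prod_type_right]
      simp only [Finset.sum_const, Finset.card_univ, Fintype.card_fun, Fintype.card_subtype_compl,
        Set.card_range_of_injective he]

theorem Fintype.sum_ite_eq_add_card_sub_one {α R : Type*} [Fintype α] [DecidableEq α] [Ring R]
    (a : α) (x : R) : ∑ c : α, (if c = a then x else 1) = x + (Fintype.card α - 1) := by
  have : 1 ≤ Fintype.card α := Fintype.card_pos_iff.2 ⟨a⟩
  simp [Finset.sum_ite, Finset.filter_ne', Finset.filter_eq', Finset.card_erase_of_mem,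
    Nat.cast_sub this]

theorem one_add_mul_exp_sub_one_le {p t : ℝ} (hp0 : 0 ≤ p) (hp1 : p ≤ 1) (ht : |t| ≤ 1) :
    1 + p * (exp t - 1) ≤ exp (p * t + t ^ 2) := by
  have hquad : exp t - 1 - t ≤ t ^ 2 := (abs_le.1 (Real.abs_exp_sub_one_sub_id_le ht)).2
  have : p * (exp t - 1) ≤ p * t + t ^ 2 := by nlinarith [sq_nonneg t]
  linarith [add_one_le_exp (p * (exp t - 1)), exp_le_exp.2 this]

theorem card_filter_mul_exp_le_sum_exp {α : Type*} [Fintype α] (f : α → ℝ) (s : ℝ)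
    [DecidablePred fun x => s ≤ f x] :
    (#{x | s ≤ f x} : ℝ) * exp s ≤ ∑ x, exp (f x) := by
  rw [← nsmul_eq_mul]
  calc #{x | s ≤ f x} • exp s ≤ ∑ x ∈ {x | s ≤ f x}, exp (f x) :=
        card_nsmul_le_sum _ _ _ fun x hx => exp_le_exp.2 (mem_filter.1 hx).2
    _ ≤ ∑ x, exp (f x) := sum_le_univ_sum_of_nonneg fun x => (exp_pos _).le

theorem injective_add_of_separated {S : Finset ℕ} {k : ℕ}
    (hsep : ∀ i ∈ S, ∀ j ∈ S, i < j → i + k ≤ j) :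
    Function.Injective fun x : S × Fin k => (x.1 : ℕ) + x.2 := by
  rintro ⟨⟨i, hi⟩, m⟩ ⟨⟨j, hj⟩, m'⟩ h
  have h' : i + m = j + m' := h
  obtain rfl : i = j := by
    rcases lt_trichotomy i j with hij | hij | hij
    · have := hsep i hi j hj hij; omega
    · exact hij
    · have := hsep j hj i hi hij; omega
  simp only [Prod.mk.injEq, true_and]
  exact Fin.ext (by omega)

def residueClass (N k r : ℕ) : Finset ℕ := {i ∈ range N | i % k = r}

theorem add_le_of_mem_residueClass {N k r i j : ℕ} (hi : i ∈ residueClass N k r)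
    (hj : j ∈ residueClass N k r) (hij : i < j) : i + k ≤ j := by
  simp only [residueClass, mem_filter] at hi hj
  have : k ∣ j - i := (Nat.modEq_iff_dvd' hij.le).1 (hi.2.trans hj.2.symm)
  have := Nat.le_of_dvd (by omega) this
  omega

theorem div_le_card_residueClass {N k r : ℕ} (hr : r < k) : N / k ≤ #(residueClass N k r) := by
  have hk : 0 < k := by omega
  simpa using card_le_card_of_injOn (s := range (N / k)) (fun j => r + j * k)
    (fun j hj => by
      simp only [coe_range, Set.mem_Iio, residueClass, coe_filter, mem_range,
        Set.mem_ofPred_eq] at hj ⊢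
      refine ⟨?_, by simp [Nat.add_mul_mod_self_right, Nat.mod_eq_of_lt hr]⟩
      have := (Nat.le_div_iff_mul_le hk).1 hj
      nlinarith)
    (fun j _ j' _ h => by simpa [hk.ne'] using h)

theorem card_filter_range_eq_sum_residueClass {k : ℕ} (hk : 0 < k) (N : ℕ) (P : ℕ → Prop)
    [DecidablePred P] :
    #{i ∈ range N | P i} = ∑ r ∈ range k, #{i ∈ residueClass N k r | P i} := by
  rw [card_eq_sum_card_fiberwise (f := (· % k)) (t := range k)
    fun i _ => mem_range.2 (Nat.mod_lt i hk)]
  simp only [residueClass, filter_filter, and_comm]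

theorem div_sub_two_le_add_one_sub_div {ℓ k : ℕ} (hk : 0 < k) :
    (ℓ : ℝ) / k - 2 ≤ ((ℓ + 1 - k) / k : ℕ) := by
  have := Nat.lt_mul_div_succ (ℓ + 1 - k) hk
  rw [mul_add] at this
  have hℓ : ℓ ≤ k * ((ℓ + 1 - k) / k + 2) := by rw [mul_add]; omega
  rw [sub_le_iff_le_add, div_le_iff₀ (by positivity)]
  exact_mod_cast hℓ.trans_eq (by ring)

theorem exists_pos_eventually_le_rpow_of_le_exp {b C c : ℝ} (hb : 1 < b) (hc : 0 < c)
    {N : ℕ → ℝ} (hN : ∀ᶠ ℓ in atTop, N ℓ ≤ C * b ^ ℓ * exp (-(c * ℓ))) :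
    ∃ δ : ℝ, 0 < δ ∧ ∀ᶠ ℓ : ℕ in atTop, N ℓ ≤ b ^ ((ℓ : ℝ) * (1 - δ)) := by
  have hlog : 0 < log b := log_pos hb
  refine ⟨c / (2 * log b), by positivity, ?_⟩
  have hexp : Tendsto (fun ℓ : ℕ => exp (c / 2 * ℓ)) atTop atTop :=
    tendsto_exp_atTop.comp (tendsto_natCast_atTop_atTop.const_mul_atTop (by positivity))
  filter_upwards [hN, hexp.eventually_ge_atTop C] with ℓ hNℓ hCℓ
  have hrpow : b ^ ((ℓ : ℝ) * (1 - c / (2 * log b))) = b ^ ℓ * exp (-(c / 2 * ℓ)) := by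
    rw [rpow_def_of_pos (by linarith), ← rpow_natCast, rpow_def_of_pos (by linarith), ← exp_add]
    congr 1
    field_simp
    ring
  rw [hrpow]
  refine hNℓ.trans ?_
  calc C * b ^ ℓ * exp (-(c * ℓ)) ≤ exp (c / 2 * ℓ) * b ^ ℓ * exp (-(c * ℓ)) := by gcongr
    _ = b ^ ℓ * exp (-(c / 2 * ℓ)) := by rw [mul_right_comm, ← exp_add]; ring_nf

theorem ekNormalStr_zero {g : ℕ} {ε : ℝ} (hε : 0 ≤ ε) {w : List ℕ} (hw : w ≠ []) :
    EKNormalStr g ε 0 w := by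
  intro σ hσ _
  rw [List.length_eq_zero_iff.1 hσ, nu, filter_true_of_mem fun _ _ => List.nil_prefix, card_range,
    div_self (by simpa using hw)]
  simpa using hε

section Occurrences

variable {g k ℓ : ℕ}

def OccursAt (w : Fin ℓ → Fin g) (σ : Fin k → Fin g) (i : ℕ) : Prop :=
  ∃ h : i + k ≤ ℓ, ∀ m : Fin k, w ⟨i + m, by omega⟩ = σ m

instance (w : Fin ℓ → Fin g) (σ : Fin k → Fin g) : DecidablePred (OccursAt w σ) :=
  fun _ => by unfold OccursAt; infer_instance

theorem ofFn_prefix_drop_iff_occursAt (w : Fin ℓ → Fin g) (σ : Fin k → Fin g) {i : ℕ}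
    (hi : i < ℓ) :
    List.ofFn (fun m => (σ m : ℕ)) <+: (List.ofFn fun j => (w j : ℕ)).drop i ↔ OccursAt w σ i := by
  simp only [List.prefix_iff_getElem, List.length_ofFn, List.length_drop, List.getElem_ofFn,
    List.getElem_drop, OccursAt]
  constructor
  · rintro ⟨hk, h⟩
    exact ⟨by omega, fun m => Fin.ext (h m m.2).symm⟩
  · rintro ⟨hk, h⟩
    exact ⟨by omega, fun m hm => congrArg Fin.val (h ⟨m, hm⟩).symm⟩

theorem nu_ofFn_eq_card_occursAt (w : Fin ℓ → Fin g) (σ : Fin k → Fin g) :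
    nu (List.ofFn fun j => (w j : ℕ)) (List.ofFn fun m => (σ m : ℕ))
      = #{i ∈ range ℓ | OccursAt w σ i} := by
  rw [nu, List.length_ofFn]
  exact congrArg card (filter_congr fun i hi => ofFn_prefix_drop_iff_occursAt w σ (mem_range.1 hi))

theorem List.exists_ofFn_eq_of_forall_lt {σ : List ℕ} (hσk : σ.length = k)
    (hσg : ∀ d ∈ σ, d < g) : ∃ v : Fin k → Fin g, List.ofFn (fun m => (v m : ℕ)) = σ := by
  subst hσk
  exact ⟨fun m => ⟨σ[m], hσg _ (List.getElem_mem _)⟩, List.ofFn_getElem⟩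

theorem sum_exp_mul_card_occursAt (hg : 0 < g) (σ : Fin k → Fin g) {S : Finset ℕ}
    (hS : ∀ i ∈ S, i + k ≤ ℓ) (hsep : ∀ i ∈ S, ∀ j ∈ S, i < j → i + k ≤ j) (t : ℝ) :
    ∑ w : Fin ℓ → Fin g, exp (t * #{i ∈ S | OccursAt w σ i})
      = g ^ ℓ * (1 + (exp t - 1) / g ^ k) ^ #S := by
  let e : S × Fin k → Fin ℓ := fun x => ⟨x.1 + x.2, by have := hS x.1 x.1.2; omega⟩
  have he : Function.Injective e := fun x y h =>
    injective_add_of_separated hsep (congrArg Fin.val h)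
  let H : (Fin k → Fin g) → ℝ := fun c => if c = σ then exp t else 1
  have hocc : ∀ w (i : S), OccursAt w σ i ↔ (fun m => w (e (i, m))) = σ := fun w i => by
    simp [OccursAt, hS i i.2, funext_iff, e]
  have hsummand : ∀ w : Fin ℓ → Fin g, exp (t * #{i ∈ S | OccursAt w σ i})
      = ∏ i : S, H (fun m => (w ∘ e) (i, m)) := fun w => by
    rw [mul_comm, Real.exp_nat_mul, ← prod_const, prod_filter, ← prod_coe_sort S]
    exact prod_congr rfl fun i _ => if_congr (hocc w i) rfl rfl
  simp only [hsummand]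
  have hprod : ∑ v : S × Fin k → Fin g, ∏ i : S, H (fun m => v (i, m))
      = (exp t + g ^ k - 1) ^ #S := by
    refine ((Equiv.curry S (Fin k) (Fin g)).sum_comp fun u => ∏ i, H (u i)).trans ?_
    rw [← Fintype.prod_sum, prod_const,
      card_univ, Fintype.card_coe, Fintype.sum_ite_eq_add_card_sub_one, Fintype.card_fun,
      Fintype.card_fin, Fintype.card_fin]
    push_cast
    ring
  have hcard : #S * k ≤ ℓ := by simpa using Fintype.card_le_of_injective e he
  have hgk : (g : ℝ) ^ k ≠ 0 := by positivity
  rw [Fintype.sum_comp_of_injective he fun v => ∏ i : S, H fun m => v (i, m), hprod, nsmul_eq_mul]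
  simp only [Fintype.card_fin, Fintype.card_prod, Fintype.card_coe, Nat.cast_pow]
  rw [← Nat.sub_add_cancel hcard, pow_add, Nat.add_sub_cancel, mul_comm #S k, pow_mul, mul_assoc,
    ← mul_pow, mul_add, mul_one, mul_div_cancel₀ _ hgk]
  ring

theorem card_chernoff_occursAt_le (hg : 0 < g) (σ : Fin k → Fin g) {S : Finset ℕ}
    (hS : ∀ i ∈ S, i + k ≤ ℓ) (hsep : ∀ i ∈ S, ∀ j ∈ S, i < j → i + k ≤ j) {t : ℝ} (ht : |t| ≤ 1)
    (a : ℝ) :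
    (#{w : Fin ℓ → Fin g | t * (a * #S) ≤ t * #{i ∈ S | OccursAt w σ i}} : ℝ)
      ≤ g ^ ℓ * exp ((t ^ 2 - t * (a - 1 / g ^ k)) * #S) := by
  set p : ℝ := 1 / g ^ k
  have hp0 : 0 ≤ p := by positivity
  have hp1 : p ≤ 1 := div_le_one_of_le₀ (one_le_pow₀ (by exact_mod_cast hg)) (by positivity)
  have hmgf := card_filter_mul_exp_le_sum_exp
    (fun w : Fin ℓ → Fin g => t * #{i ∈ S | OccursAt w σ i}) (t * (a * #S))
  rw [sum_exp_mul_card_occursAt hg σ hS hsep t] at hmgf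
  have hstep : (1 + (exp t - 1) / g ^ k) ^ #S ≤ exp ((p * t + t ^ 2) * #S) := by
    rw [mul_comm, exp_nat_mul, div_eq_mul_one_div, mul_comm]
    have hbase : 0 ≤ 1 + p * (exp t - 1) := by nlinarith [exp_pos t]
    exact pow_le_pow_left₀ hbase (one_add_mul_exp_sub_one_le hp0 hp1 ht) _
  rw [← le_div_iff₀ (exp_pos _)] at hmgf
  refine hmgf.trans ?_
  rw [div_le_iff₀ (exp_pos _), mul_assoc, ← exp_add]
  refine mul_le_mul_of_nonneg_left (hstep.trans_eq ?_) (by positivity)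
  ring_nf

theorem card_deviation_occursAt_le (hg : 0 < g) (σ : Fin k → Fin g) {S : Finset ℕ}
    (hS : ∀ i ∈ S, i + k ≤ ℓ) (hsep : ∀ i ∈ S, ∀ j ∈ S, i < j → i + k ≤ j) {ε η : ℝ}
    (hη0 : 0 ≤ η) (hη1 : η ≤ 1) :
    (#{w : Fin ℓ → Fin g | ε * #S < |(#{i ∈ S | OccursAt w σ i} : ℝ) - #S / (g : ℝ) ^ k|} : ℝ)
      ≤ 2 * g ^ ℓ * exp ((η ^ 2 - η * ε) * #S) := by
  set p : ℝ := 1 / g ^ k with hp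
  have hup := card_chernoff_occursAt_le hg σ hS hsep (t := η) (by rwa [abs_of_nonneg hη0]) (p + ε)
  have hlo := card_chernoff_occursAt_le hg σ hS hsep (t := -η) (by rwa [abs_neg, abs_of_nonneg hη0])
    (p - ε)
  rw [← hp, add_sub_cancel_left] at hup
  rw [← hp, sub_sub_cancel_left, neg_sq, neg_mul_neg] at hlo
  have hsub : ({w | ε * #S < |(#{i ∈ S | OccursAt w σ i} : ℝ) - #S / (g : ℝ) ^ k|} :
        Finset (Fin ℓ → Fin g))
      ⊆ ({w | η * ((p + ε) * #S) ≤ η * #{i ∈ S | OccursAt w σ i}} : Finset _)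
        ∪ ({w | -η * ((p - ε) * #S) ≤ -η * #{i ∈ S | OccursAt w σ i}} : Finset _) := by
    intro w hw
    simp only [mem_filter, mem_univ, true_and, mem_union] at hw ⊢
    have hdiv : (#S : ℝ) / g ^ k = p * #S := by ring
    rcases lt_abs.1 hw with h | h
    · exact .inl (mul_le_mul_of_nonneg_left (by linarith) hη0)
    · refine .inr ?_
      rw [neg_mul, neg_mul, neg_le_neg_iff]
      exact mul_le_mul_of_nonneg_left (by linarith) hη0
  calc (#{w : Fin ℓ → Fin g | ε * #S < |(#{i ∈ S | OccursAt w σ i} : ℝ) - #S / (g : ℝ) ^ k|} : ℝ)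
      ≤ #{w | η * ((p + ε) * #S) ≤ η * #{i ∈ S | OccursAt w σ i}}
        + #{w | -η * ((p - ε) * #S) ≤ -η * #{i ∈ S | OccursAt w σ i}} := by
        exact_mod_cast (card_le_card hsub).trans (card_union_le _ _)
    _ ≤ 2 * g ^ ℓ * exp ((η ^ 2 - η * ε) * #S) := by
        linarith

theorem card_occursAt_eq_sum_residueClass (hk : 0 < k) (w : Fin ℓ → Fin g) (σ : Fin k → Fin g) :
    #{i ∈ range ℓ | OccursAt w σ i}
      = ∑ r ∈ range k, #{i ∈ residueClass (ℓ + 1 - k) k r | OccursAt w σ i} := by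
  rw [← card_filter_range_eq_sum_residueClass hk]
  congr 1
  ext i
  simp only [mem_filter, mem_range]
  exact ⟨fun ⟨_, h⟩ => ⟨by obtain ⟨_, _⟩ := h; omega, h⟩,
    fun ⟨_, h⟩ => ⟨by obtain ⟨_, _⟩ := h; omega, h⟩⟩

theorem ekNormalStr_of_forall_residueClass (hk : 0 < k) (hkℓ : k ≤ ℓ) {ε : ℝ}
    (hkε : k ≤ ε / 2 * ℓ) (w : Fin ℓ → Fin g)
    (hdev : ∀ σ : Fin k → Fin g, ∀ r ∈ range k,
      |(#{i ∈ residueClass (ℓ + 1 - k) k r | OccursAt w σ i} : ℝ)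
          - #(residueClass (ℓ + 1 - k) k r) / (g : ℝ) ^ k|
        ≤ ε / 2 * #(residueClass (ℓ + 1 - k) k r)) :
    EKNormalStr g ε k (List.ofFn fun i => (w i : ℕ)) := by
  intro σ hσk hσg
  obtain ⟨v, rfl⟩ := List.exists_ofFn_eq_of_forall_lt hσk hσg
  have hg : 0 < g := (v ⟨0, hk⟩).pos
  set p : ℝ := 1 / (g : ℝ) ^ k
  have hp0 : 0 ≤ p := by positivity
  have hp1 : p ≤ 1 := div_le_one_of_le₀ (one_le_pow₀ (by exact_mod_cast hg)) (by positivity)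
  have hn : ∑ r ∈ range k, (#(residueClass (ℓ + 1 - k) k r) : ℝ) = ℓ + 1 - k := by
    have := card_filter_range_eq_sum_residueClass hk (ℓ + 1 - k) fun _ => True
    simp only [filter_true, card_range] at this
    rw [← Nat.cast_sum, ← this, Nat.cast_sub (by omega)]
    push_cast
    ring
  rw [List.length_ofFn, nu_ofFn_eq_card_occursAt, card_occursAt_eq_sum_residueClass hk]
  have hsum : |(∑ r ∈ range k, (#{i ∈ residueClass (ℓ + 1 - k) k r | OccursAt w v i} : ℝ))
      - p * (ℓ + 1 - k)| ≤ ε / 2 * (ℓ + 1 - k) := by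
    calc _ = |∑ r ∈ range k, ((#{i ∈ residueClass (ℓ + 1 - k) k r | OccursAt w v i} : ℝ)
            - #(residueClass (ℓ + 1 - k) k r) / (g : ℝ) ^ k)| := by
          rw [sum_sub_distrib, ← hn, mul_sum]
          simp only [p, one_div_mul_eq_div]
      _ ≤ ∑ r ∈ range k, |(#{i ∈ residueClass (ℓ + 1 - k) k r | OccursAt w v i} : ℝ)
            - #(residueClass (ℓ + 1 - k) k r) / (g : ℝ) ^ k| := abs_sum_le_sum_abs _ _
      _ ≤ ∑ r ∈ range k, ε / 2 * #(residueClass (ℓ + 1 - k) k r) := sum_le_sum (hdev v)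
      _ = ε / 2 * (ℓ + 1 - k) := by rw [← mul_sum, hn]
  have hk1 : (1 : ℝ) ≤ k := by exact_mod_cast hk
  have hℓ : (0 : ℝ) < ℓ := by linarith [(Nat.cast_le (α := ℝ)).2 hkℓ]
  have hε : 0 ≤ ε := by nlinarith
  have hpk : 0 ≤ p * (k - 1) ∧ p * (k - 1) ≤ k := ⟨by nlinarith, by nlinarith⟩
  rw [div_sub' hℓ.ne', abs_div, abs_of_pos hℓ, div_le_iff₀ hℓ]
  push_cast
  rw [abs_le] at hsum ⊢
  constructor <;> nlinarith

open scoped Classical in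
theorem card_not_ekNormalStr_le (hg : 0 < g) (hk : 0 < k) (hkℓ : k ≤ ℓ) {ε η c : ℝ}
    (hkε : k ≤ ε / 2 * ℓ) (hη0 : 0 ≤ η) (hη1 : η ≤ 1) (hc0 : 0 ≤ c)
    (hc : c ≤ η * (ε / 2) - η ^ 2) :
    (#{w : Fin ℓ → Fin g | ¬EKNormalStr g ε k (List.ofFn fun i => (w i : ℕ))} : ℝ)
      ≤ g ^ k * k * 2 * exp (2 * c) * g ^ ℓ * exp (-(c / k * ℓ)) := by
  let bad : (Fin k → Fin g) → ℕ → Finset (Fin ℓ → Fin g) := fun σ r =>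
    {w | ε / 2 * #(residueClass (ℓ + 1 - k) k r)
      < |(#{i ∈ residueClass (ℓ + 1 - k) k r | OccursAt w σ i} : ℝ)
          - #(residueClass (ℓ + 1 - k) k r) / (g : ℝ) ^ k|}
  have hsub : ({w | ¬EKNormalStr g ε k (List.ofFn fun i => (w i : ℕ))} : Finset (Fin ℓ → Fin g))
      ⊆ univ.biUnion fun σ => (range k).biUnion (bad σ) := by
    intro w hw
    by_contra hgood
    simp only [mem_biUnion, mem_univ, true_and, not_exists, not_and, bad, mem_filter,
      not_lt] at hgood
    exact (mem_filter.1 hw).2 (ekNormalStr_of_forall_residueClass hk hkℓ hkε w hgood)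
  have hbad : ∀ σ, ∀ r ∈ range k,
      (#(bad σ r) : ℝ) ≤ 2 * g ^ ℓ * (exp (2 * c) * exp (-(c / k * ℓ))) := by
    intro σ r hr
    refine (card_deviation_occursAt_le hg σ (fun i hi => ?_)
      (fun i hi j hj => add_le_of_mem_residueClass hi hj) hη0 hη1).trans ?_
    · simp only [residueClass, mem_filter, mem_range] at hi
      omega
    · have hn : (ℓ : ℝ) / k - 2 ≤ #(residueClass (ℓ + 1 - k) k r) :=
        (div_sub_two_le_add_one_sub_div hk).trans
          (by exact_mod_cast div_le_card_residueClass (mem_range.1 hr))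
      have : c / k * ℓ = c * (ℓ / k) := by ring
      rw [← exp_add]
      gcongr
      nlinarith [mul_le_mul_of_nonneg_left hn hc0]
  calc (#{w : Fin ℓ → Fin g | ¬EKNormalStr g ε k (List.ofFn fun i => (w i : ℕ))} : ℝ)
      ≤ ∑ σ : Fin k → Fin g, ∑ r ∈ range k, (#(bad σ r) : ℝ) := by
        refine (Nat.cast_le.2 ((card_le_card hsub).trans card_biUnion_le)).trans ?_
        push_cast
        exact sum_le_sum fun σ _ => by exact_mod_cast card_biUnion_le
    _ ≤ _ := by
        refine (sum_le_sum fun σ _ => sum_le_sum (hbad σ)).trans_eq ?_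
        simp only [sum_const, card_range, nsmul_eq_mul, card_univ, Fintype.card_pi,
          Fintype.card_fin, prod_const, Nat.cast_pow]
        ring

end Occurrences

open scoped Classical in
theorem copeland_erdos_string_count (g : ℕ) (hg : 2 ≤ g) (ε : ℝ) (hε : 0 < ε) (k : ℕ) :
    ∃ δ' : ℝ, 0 < δ' ∧ ∀ᶠ ℓ : ℕ in atTop,
      ((Finset.univ.filter fun w : Fin ℓ → Fin g =>
          ¬ EKNormalStr g ε k (List.ofFn fun i => ((w i : ℕ)))).card : ℝ)
        ≤ (g : ℝ) ^ ((ℓ : ℝ) * (1 - δ')) := by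
  rcases Nat.eq_zero_or_pos k with rfl | hk
  · refine ⟨1, one_pos, ?_⟩
    filter_upwards [eventually_gt_atTop 0] with ℓ hℓ
    rw [filter_false_of_mem fun w _ =>
      not_not.2 (ekNormalStr_zero hε.le (by simpa using hℓ.ne'))]
    simp
  set η := min (ε / 4) 1
  have hη0 : 0 < η := lt_min (by positivity) one_pos
  obtain ⟨c, hc0, hc⟩ : ∃ c : ℝ, 0 < c ∧ c ≤ η * (ε / 2) - η ^ 2 :=
    ⟨_, by nlinarith [min_le_left (ε / 4) 1], le_rfl⟩
  refine exists_pos_eventually_le_rpow_of_le_exp (C := g ^ k * k * 2 * exp (2 * c))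
    (by exact_mod_cast hg) (div_pos hc0 (Nat.cast_pos.2 hk)) ?_
  filter_upwards [eventually_ge_atTop k, eventually_ge_atTop ⌈2 * k / ε⌉₊] with ℓ hkℓ hℓε
  have hkε : (k : ℝ) ≤ ε / 2 * ℓ := by
    linarith [(div_le_iff₀ hε).1 (Nat.ceil_le.1 hℓε)]
  exact card_not_ekNormalStr_le (by omega) hk hkℓ hkε hη0.le (min_le_right _ _) hc0.le hc
end

section
/- Let e be a positive integer. The number of pairs (x, y) of residues modulo 2^e satisfying the congruence x² ≡ y² (mod 2^e) is at most 4e · 2^e. -/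
/-!
Since `x² - y² = (x - y)(x + y)` and `2` is prime, every solution has `2^j ∣ x - y` and
`2^(e-j) ∣ x + y` for some `j ≤ e`, and `j ≥ 1` can be arranged because `x - y` and `x + y`
have the same parity. For fixed `j` the pair `(x + y, x - y)` determines `(x, y)`; as
`x + y ∈ [0, 2^(e+1))` and `x - y ∈ (-2^e, 2^e)` it takes at most `2·2^j · 2·2^(e-j) = 4·2^e`
values. Summing over the `e` values of `j` gives the bound.
-/

open Finset

theorem exists_pow_dvd_and_pow_dvd_of_pow_dvd_mul {α : Type*} [CommMonoidWithZero α]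
    [IsCancelMulZero α] [DecompositionMonoid α] {p a b : α} (hp : Prime p) {e : ℕ}
    (h : p ^ e ∣ a * b) :
    ∃ j ≤ e, p ^ j ∣ a ∧ p ^ (e - j) ∣ b := by
  obtain ⟨d₁, d₂, hd₁, hd₂, hd⟩ := exists_dvd_and_dvd_of_dvd_mul h
  obtain ⟨j, hje, hassoc⟩ := (dvd_prime_pow hp e).1 (hd ▸ dvd_mul_right d₁ d₂)
  obtain ⟨u, hu⟩ := id hassoc
  have hd₁0 : d₁ ≠ 0 := by
    rintro rfl
    exact pow_ne_zero j hp.ne_zero (by simpa using hu.symm)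
  have hd₂_eq : p ^ (e - j) * u = d₂ := by
    refine mul_left_cancel₀ hd₁0 ?_
    calc d₁ * (p ^ (e - j) * u) = d₁ * u * p ^ (e - j) := by ac_rfl
      _ = p ^ e := by rw [hu, ← pow_add, Nat.add_sub_cancel' hje]
      _ = d₁ * d₂ := hd
  exact ⟨j, hje, hassoc.symm.dvd.trans hd₁, (Dvd.intro _ hd₂_eq).trans hd₂⟩

theorem exists_two_pow_dvd_sub_and_add_of_dvd_sq_sub_sq {x y : ℤ} {e : ℕ} (he : 1 ≤ e)
    (h : 2 ^ e ∣ x ^ 2 - y ^ 2) :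
    ∃ j ∈ Icc 1 e, 2 ^ j ∣ x - y ∧ 2 ^ (e - j) ∣ x + y := by
  rw [sq_sub_sq, mul_comm] at h
  obtain ⟨j, hje, hsub, hadd⟩ := exists_pow_dvd_and_pow_dvd_of_pow_dvd_mul Int.prime_two h
  rcases Nat.eq_zero_or_pos j with rfl | hj
  · -- `x - y` and `x + y` have the same parity
    have h2 : (2 : ℤ) ∣ x + y := (dvd_pow_self 2 (by omega)).trans hadd
    refine ⟨1, by simp [he], ?_, (pow_dvd_pow 2 (Nat.sub_le e 1)).trans hadd⟩
    have hxy : x - y = (x + y) - 2 * y := by ring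
    simpa [hxy] using dvd_sub h2 (dvd_mul_right 2 y)
  · exact ⟨j, mem_Icc.2 ⟨hj, hje⟩, hsub, hadd⟩

theorem card_filter_dvd_sub_and_dvd_add_le (a b : ℕ) :
    #{xy ∈ range (a * b) ×ˢ range (a * b) | (a : ℤ) ∣ xy.1 - xy.2 ∧ (b : ℤ) ∣ xy.1 + xy.2}
      ≤ 4 * (a * b) := by
  set s := {xy ∈ range (a * b) ×ˢ range (a * b) | (a : ℤ) ∣ xy.1 - xy.2 ∧ (b : ℤ) ∣ xy.1 + xy.2}
  have hmem : ∀ xy ∈ s, xy.1 < a * b ∧ xy.2 < a * b ∧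
      a ∣ xy.1 + a * b - xy.2 ∧ b ∣ xy.1 + xy.2 := by
    rintro ⟨x, y⟩ hxy
    simp only [s, mem_filter, mem_product, mem_range] at hxy
    obtain ⟨⟨hx, hy⟩, hsub, hadd⟩ := hxy
    refine ⟨hx, hy, Int.natCast_dvd_natCast.mp ?_, Int.natCast_dvd_natCast.mp (by simpa)⟩
    rw [Nat.cast_sub (by omega)]
    push_cast
    simpa [add_sub_right_comm] using dvd_add hsub (dvd_mul_right (a : ℤ) b)
  -- `x + a * b - y` is `x - y` shifted into `ℕ`; with `x + y` it determines `(x, y)`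
  calc #s ≤ #(range (2 * a) ×ˢ range (2 * b)) := by
        refine card_le_card_of_injOn (fun xy => ((xy.1 + xy.2) / b, (xy.1 + a * b - xy.2) / a))
          (fun xy hxy => ?_) (fun xy hxy xy' hxy' heq => ?_)
        · obtain ⟨hx, hy, -, -⟩ := hmem xy hxy
          have ha : 0 < a := Nat.pos_of_mul_pos_right (by omega : 0 < a * b)
          have hb : 0 < b := Nat.pos_of_mul_pos_left (by omega : 0 < a * b)
          simp only [coe_product, coe_range, Set.mem_prod, Set.mem_Iio,
            Nat.div_lt_iff_lt_mul ha, Nat.div_lt_iff_lt_mul hb]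
          have h2a : 2 * a * b = a * b + a * b := by ring
          have h2b : 2 * b * a = a * b + a * b := by ring
          omega
        · obtain ⟨hx, hy, hsub, hadd⟩ := hmem xy hxy
          obtain ⟨hx', hy', hsub', hadd'⟩ := hmem xy' hxy'
          simp only [Prod.mk.injEq, Nat.div_left_inj hadd hadd', Nat.div_left_inj hsub hsub'] at heq
          ext <;> omega
    _ = 4 * (a * b) := by rw [card_product, card_range, card_range]; ring

/-- The number of pairs `(x, y)` of residues modulo `2^e` with `x² ≡ y² (mod 2^e)` is
at most `4e·2^e`. -/
theorem count_square_congruence_two (e : ℕ) (he : 1 ≤ e) :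
    ((Finset.range (2 ^ e) ×ˢ Finset.range (2 ^ e)).filter
        (fun xy : ℕ × ℕ => ((2 : ℤ) ^ e ∣ (xy.1 : ℤ) ^ 2 - (xy.2 : ℤ) ^ 2))).card
      ≤ 4 * e * 2 ^ e := by
  set piece : ℕ → Finset (ℕ × ℕ) := fun j =>
    {xy ∈ range (2 ^ e) ×ˢ range (2 ^ e) |
      (2 : ℤ) ^ j ∣ xy.1 - xy.2 ∧ (2 : ℤ) ^ (e - j) ∣ xy.1 + xy.2}
  have hcover :
      {xy ∈ range (2 ^ e) ×ˢ range (2 ^ e) | (2 : ℤ) ^ e ∣ (xy.1 : ℤ) ^ 2 - (xy.2 : ℤ) ^ 2} ⊆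
        (Icc 1 e).biUnion piece := by
    intro xy hxy
    rw [mem_filter] at hxy
    obtain ⟨j, hj, hsub, hadd⟩ := exists_two_pow_dvd_sub_and_add_of_dvd_sq_sub_sq he hxy.2
    exact mem_biUnion.2 ⟨j, hj, mem_filter.2 ⟨hxy.1, hsub, hadd⟩⟩
  have hpiece : ∀ j ∈ Icc 1 e, #(piece j) ≤ 4 * 2 ^ e := by
    intro j hj
    have h := card_filter_dvd_sub_and_dvd_add_le (2 ^ j) (2 ^ (e - j))
    rwa [← pow_add, Nat.add_sub_cancel' (mem_Icc.1 hj).2, Nat.cast_pow, Nat.cast_pow,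
      Nat.cast_ofNat] at h
  calc _ ≤ #((Icc 1 e).biUnion piece) := card_le_card hcover
    _ ≤ #(Icc 1 e) * (4 * 2 ^ e) := card_biUnion_le_card_mul _ _ _ hpiece
    _ = 4 * e * 2 ^ e := by rw [Nat.card_Icc, Nat.add_sub_cancel]; ring
end

section
/- Let p be an odd prime and e a positive integer. The number of pairs (x, y) of residues modulo p^e satisfying x² ≡ y² (mod p^e) is exactly 2·p^e·(1 − 1/p)·⌈e/2⌉ + p^{2⌊e/2⌋}. -/
open Finset

/-!
Substituting `s = x + y`, `d = x - y`, which is invertible because `2` is a unit modulo an odd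
`p ^ e`, turns `x² = y²` into `s * d = 0` in `ZMod (p ^ e)`. For fixed `d` the solutions `s`
form the annihilator of `d`, of size `gcd(p ^ e, d)`. Summing these gcds over `d < p ^ e`,
split according to whether `p ∣ d`, gives `e (p - 1) p ^ (e - 1) + p ^ e`, which agrees with
the stated closed form for either parity of `e`.
-/

section SumDiff

variable {R : Type*} [CommRing R]

noncomputable def sumDiffEquiv (h2 : IsUnit (2 : R)) : R × R ≃ R × R where
  toFun ab := (ab.1 + ab.2, ab.1 - ab.2)
  invFun sd := (h2.unit⁻¹ * (sd.1 + sd.2), h2.unit⁻¹ * (sd.1 - sd.2))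
  left_inv ab := by
    have h := h2.val_inv_mul
    ext
    · linear_combination ab.1 * h
    · linear_combination ab.2 * h
  right_inv sd := by
    have h := h2.val_inv_mul
    ext
    · linear_combination sd.1 * h
    · linear_combination sd.2 * h

theorem card_sq_eq_sq_eq_card_mul_eq_zero [Fintype R] [DecidableEq R] (h2 : IsUnit (2 : R)) :
    #{ab : R × R | ab.1 ^ 2 = ab.2 ^ 2} = #{sd : R × R | sd.1 * sd.2 = 0} :=
  card_equiv (sumDiffEquiv h2) fun ab => by
    simp [sumDiffEquiv, ← sub_eq_zero (a := ab.1 ^ 2), sq_sub_sq]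

end SumDiff

namespace ZMod

theorem image_val_univ (n : ℕ) [NeZero n] : (univ : Finset (ZMod n)).image val = range n := by
  ext k
  simp only [mem_image, mem_univ, true_and, mem_range]
  exact ⟨fun ⟨a, ha⟩ => ha ▸ a.val_lt, fun hk => ⟨k, val_cast_of_lt hk⟩⟩

theorem card_filter_range_dvd_sq_sub_sq (n : ℕ) [NeZero n] :
    #{xy ∈ range n ×ˢ range n | (n : ℤ) ∣ (xy.1 : ℤ) ^ 2 - (xy.2 : ℤ) ^ 2}
      = #{ab : ZMod n × ZMod n | ab.1 ^ 2 = ab.2 ^ 2} := by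
  rw [← image_val_univ, ← prodMap_image_product, filter_image,
    card_image_of_injective _ ((val_injective n).prodMap (val_injective n)), univ_product_univ]
  congr! 2 with ab
  rw [eq_comm, ← intCast_eq_intCast_iff_dvd_sub]
  push_cast
  simp only [Prod.map_fst, Prod.map_snd, natCast_val, cast_id', id]

theorem card_filter_mul_eq_zero (n : ℕ) [NeZero n] (d : ZMod n) :
    #{s : ZMod n | s * d = 0} = n.gcd d.val := by
  -- `s ↦ s * d` has image `zmultiples d`, of order `n / gcd(n, d)`, and kernel the annihilator.
  set f := AddMonoidHom.mulRight d
  have hrange : f.range = AddSubgroup.zmultiples d := by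
    ext x
    simp only [AddMonoidHom.mem_range, AddSubgroup.mem_zmultiples_iff, zsmul_eq_mul]
    exact intCast_surjective.exists
  have hker : Nat.card f.ker = #{s : ZMod n | s * d = 0} := by
    rw [← Fintype.card_subtype, ← Nat.card_eq_fintype_card]
    rfl
  have key := f.ker.card_mul_index
  rw [AddSubgroup.index_ker, hrange, Nat.card_zmultiples, ← natCast_zmod_val d,
    addOrderOf_coe _ (NeZero.ne n), Nat.card_zmod, hker] at key
  have hindex : 0 < n / n.gcd d.val :=
    Nat.div_pos (Nat.gcd_le_left _ (NeZero.pos n)) (Nat.gcd_pos_of_pos_left _ (NeZero.pos n))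
  rw [Nat.eq_div_of_mul_eq_left hindex.ne' key,
    Nat.div_div_self (Nat.gcd_dvd_left _ _) (NeZero.ne n)]

theorem card_prod_mul_eq_zero (n : ℕ) [NeZero n] :
    #{sd : ZMod n × ZMod n | sd.1 * sd.2 = 0} = ∑ d ∈ range n, n.gcd d := by
  rw [card_filter, ← univ_product_univ, sum_product_right, ← image_val_univ,
    sum_image fun a _ b _ h => val_injective n h]
  simp only [← card_filter, card_filter_mul_eq_zero]

end ZMod

namespace Nat

theorem sum_filter_dvd_range_mul {M : Type*} [AddCommMonoid M] {p : ℕ} (hp : 0 < p) (m : ℕ)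
    (f : ℕ → M) : ∑ d ∈ range (p * m) with p ∣ d, f d = ∑ d ∈ range m, f (p * d) := by
  have : {d ∈ range (p * m) | p ∣ d} = (range m).image (p * ·) := by
    ext d
    simp only [mem_filter, mem_range, mem_image]
    constructor
    · rintro ⟨hd, k, rfl⟩
      exact ⟨k, Nat.lt_of_mul_lt_mul_left hd, rfl⟩
    · rintro ⟨k, hk, rfl⟩
      exact ⟨Nat.mul_lt_mul_of_pos_left hk hp, dvd_mul_right p k⟩
  rw [this, sum_image fun a _ b _ h => Nat.eq_of_mul_eq_mul_left hp h]

theorem sum_range_gcd_prime_pow {p : ℕ} (hp : p.Prime) (e : ℕ) :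
    ∑ d ∈ range (p ^ e), (p ^ e).gcd d = e * (p - 1) * p ^ (e - 1) + p ^ e := by
  induction e with
  | zero => simp
  | succ e ih =>
    have hpow : p ^ (e + 1) = p * p ^ e := pow_succ' ..
    have hmultiples : ∑ d ∈ range (p ^ (e + 1)) with p ∣ d, (p ^ (e + 1)).gcd d
        = p * ∑ d ∈ range (p ^ e), (p ^ e).gcd d := by
      rw [hpow, sum_filter_dvd_range_mul hp.pos, mul_sum]
      simp only [Nat.gcd_mul_left]
    have hunits : ∑ d ∈ range (p ^ (e + 1)) with ¬p ∣ d, (p ^ (e + 1)).gcd d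
        = p ^ (e + 1) - p ^ e := by
      have hcard : #{d ∈ range (p ^ (e + 1)) | p ∣ d} = p ^ e := by
        rw [card_eq_sum_ones, hpow, sum_filter_dvd_range_mul hp.pos, sum_const, card_range,
          smul_eq_mul, mul_one]
      rw [sum_congr rfl fun d hd =>
          ((hp.coprime_iff_not_dvd.2 (mem_filter.1 hd).2).pow_left _).gcd_eq_one,
        sum_const, smul_eq_mul, mul_one, filter_not, card_sdiff_of_subset (filter_subset _ _),
        hcard, card_range]
    rw [← sum_filter_add_sum_filter_not _ (p ∣ ·), hmultiples, hunits, ih, Nat.add_sub_cancel]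
    have hle : p ^ e ≤ p ^ (e + 1) := Nat.pow_le_pow_right hp.pos e.le_succ
    have hshift : e * p ^ (e - 1) * p = e * p ^ e := by
      cases e with
      | zero => simp
      | succ e => rw [Nat.add_sub_cancel, mul_assoc, ← pow_succ]
    zify [hle, hp.one_le] at hshift ⊢
    linear_combination (p - 1 : ℤ) * hshift

theorem mul_sub_one_mul_pow_sub_one_add_pow {p : ℕ} (hp : 0 < p) (e : ℕ) :
    e * (p - 1) * p ^ (e - 1) + p ^ e
      = 2 * (p - 1) * p ^ (e - 1) * ((e + 1) / 2) + p ^ (2 * (e / 2)) := by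
  rcases Nat.even_or_odd' e with ⟨k, rfl | rfl⟩
  · rw [show (2 * k + 1) / 2 = k by omega, Nat.mul_div_cancel_left k two_pos]
    ring
  · rw [show (2 * k + 1 + 1) / 2 = k + 1 by omega, show (2 * k + 1) / 2 = k by omega,
      Nat.add_sub_cancel, pow_succ]
    zify [hp]
    ring

end Nat

theorem count_square_congruence_odd_prime_exact_general (p e : ℕ) (hp : p.Prime) (hodd : Odd p) :
    ((Finset.range (p ^ e) ×ˢ Finset.range (p ^ e)).filter
        (fun xy : ℕ × ℕ => ((p : ℤ) ^ e ∣ (xy.1 : ℤ) ^ 2 - (xy.2 : ℤ) ^ 2))).card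
      = 2 * (p - 1) * p ^ (e - 1) * ((e + 1) / 2) + p ^ (2 * (e / 2)) := by
  have : NeZero (p ^ e) := ⟨pow_ne_zero e hp.ne_zero⟩
  have h2 : IsUnit (2 : ZMod (p ^ e)) :=
    mod_cast (ZMod.isUnit_iff_coprime 2 (p ^ e)).2 (Nat.coprime_two_left.2 hodd.pow)
  rw [← Nat.cast_pow, ZMod.card_filter_range_dvd_sq_sub_sq, card_sq_eq_sq_eq_card_mul_eq_zero h2,
    ZMod.card_prod_mul_eq_zero, Nat.sum_range_gcd_prime_pow hp,
    Nat.mul_sub_one_mul_pow_sub_one_add_pow hp.pos]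

/-- For an odd prime `p`, the number of pairs `(x, y)` of residues modulo `p^e` with
`x² ≡ y² (mod p^e)` is exactly `2·p^e·(1 − 1/p)·⌈e/2⌉ + p^{2⌊e/2⌋}`.  Here
`2·p^e·(1 − 1/p) = 2·(p − 1)·p^(e−1)`, `⌈e/2⌉ = (e+1)/2` and `⌊e/2⌋ = e/2` in
natural-number arithmetic. -/
theorem count_square_congruence_odd_prime_exact (p e : ℕ) (hp : p.Prime) (hodd : Odd p)
    (he : 1 ≤ e) :
    ((Finset.range (p ^ e) ×ˢ Finset.range (p ^ e)).filter
        (fun xy : ℕ × ℕ => ((p : ℤ) ^ e ∣ (xy.1 : ℤ) ^ 2 - (xy.2 : ℤ) ^ 2))).card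
      = 2 * (p - 1) * p ^ (e - 1) * ((e + 1) / 2) + p ^ (2 * (e / 2)) :=
  count_square_congruence_odd_prime_exact_general p e hp hodd
end

section
/- Fix an integer base g ≥ 2, a real ε > 0, and k ∈ ℕ, and let δ = δ(ε,k) > 0 be a constant such that for all sufficiently large m the number of integers in [1, m] that are not (ε,k)-normal to base g is at most m^{1−δ}. For a positive integer m, set m' = ⌊m^{1−δ/2}⌋, ℓ = ⌊(⌊log_g m²⌋ + 1)/2⌋, and b(n, m) = ⌊n²/g^ℓ⌋. Then the number of integers n ∈ [m', m] for which b(n, m) is not (ε,k)-normal to base g is o(m) as m → ∞. -/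
/-! Put `P = g ^ ℓ`, so that `P² ≤ g m²` and `m² < g P²`. On `n ≥ N`, consecutive squares are
at least `2N` apart, so every fibre of `n ↦ ⌊n² / P⌋` has at most `P / (2N) + 1` elements; with
`N = max(m', ⌊√P⌋)` this is `O(m^{δ/2})`. The fibre over `0` contains only `n ≤ √P`, and the
other values lie in `[1, g m]`, where at most `(g m)^{1-δ}` integers are not `(ε,k)`-normal.
Hence the exceptional `n` number `O(m^{1-δ/2} + m^{1-δ} + m^{1/2}) = o(m)`. -/

open Filter Asymptotics

open Finset

/-- `n ^ 2 / halfDigitPow g (m ^ 2)` is `b(n, m)`: it drops the last `⌊L(m²)/2⌋` base-`g` digits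
of `n²`. -/
def halfDigitPow (g x : ℕ) : ℕ :=
  g ^ ((Nat.log g x + 1) / 2)

section halfDigitPow

variable {g : ℕ}

lemma lt_mul_sq_halfDigitPow (hg : 1 < g) (x : ℕ) : x < g * halfDigitPow g x ^ 2 :=
  calc x < g ^ (Nat.log g x + 1) := Nat.lt_pow_succ_log_self hg x
    _ ≤ g ^ ((Nat.log g x + 1) / 2 * 2 + 1) := Nat.pow_le_pow_right (by omega) (by omega)
    _ = g * halfDigitPow g x ^ 2 := by rw [halfDigitPow, ← pow_mul, pow_succ']

lemma sq_halfDigitPow_le (hg : 1 < g) {x : ℕ} (hx : x ≠ 0) : halfDigitPow g x ^ 2 ≤ g * x :=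
  calc halfDigitPow g x ^ 2 ≤ g ^ (Nat.log g x + 1) := by
        rw [halfDigitPow, ← pow_mul]; exact Nat.pow_le_pow_right (by omega) (by omega)
    _ ≤ g * x := by rw [pow_succ']; exact Nat.mul_le_mul_left g (Nat.pow_log_le_self g hx)

lemma halfDigitPow_sq_le (hg : 1 < g) {m : ℕ} (hm : m ≠ 0) :
    halfDigitPow g (m ^ 2) ≤ g * m := by
  have := sq_halfDigitPow_le hg (pow_ne_zero 2 hm)
  exact le_of_pow_le_pow_left₀ two_ne_zero (Nat.zero_le _) (by nlinarith)

lemma sq_div_halfDigitPow_sq_le (hg : 1 < g) (m : ℕ) : m ^ 2 / halfDigitPow g (m ^ 2) ≤ g * m := by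
  have hm : m < g * halfDigitPow g (m ^ 2) := by
    have := lt_mul_sq_halfDigitPow hg (m ^ 2)
    exact lt_of_pow_lt_pow_left₀ 2 (Nat.zero_le _) (by nlinarith)
  exact Nat.div_le_of_le_mul (by nlinarith)

end halfDigitPow

lemma sub_le_div_of_sq_div_eq {P N x y : ℕ} (hP : 0 < P) (hN : 0 < N) (hNx : N ≤ x) (hxy : x ≤ y)
    (h : y ^ 2 / P = x ^ 2 / P) : y - x ≤ P / (2 * N) := by
  obtain ⟨d, rfl⟩ := Nat.exists_eq_add_of_le hxy
  have hy : (x + d) ^ 2 < x ^ 2 + P := by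
    have := Nat.lt_div_mul_add (a := (x + d) ^ 2) hP
    have := Nat.div_mul_le_self (x ^ 2) P
    rw [h] at *; omega
  rw [Nat.add_sub_cancel_left, Nat.le_div_iff_mul_le (by omega)]
  nlinarith

lemma card_le_of_sq_div_eq {P N b : ℕ} (hP : 0 < P) (hN : 0 < N) {t : Finset ℕ}
    (ht : ∀ n ∈ t, N ≤ n ∧ n ^ 2 / P = b) : #t ≤ P / (2 * N) + 1 := by
  rcases t.eq_empty_or_nonempty with rfl | hne
  · simp
  have hmin := ht _ (t.min'_mem hne)
  calc #t ≤ #(Icc (t.min' hne) (t.min' hne + P / (2 * N))) := by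
        refine card_le_card fun n hn => mem_Icc.2 ⟨t.min'_le n hn, ?_⟩
        have := sub_le_div_of_sq_div_eq hP hN hmin.1 (t.min'_le n hn) ((ht n hn).2.trans hmin.2.symm)
        omega
    _ = P / (2 * N) + 1 := by rw [Nat.card_Icc, add_assoc, Nat.add_sub_cancel_left]

lemma card_filter_sq_div_le (p : ℕ → Prop) [DecidablePred p] {P : ℕ} (hP : 0 < P) (m' m : ℕ) :
    #{n ∈ Icc m' m | p (n ^ 2 / P)} ≤
      (P / (2 * max m' (Nat.sqrt P)) + 1) * #{a ∈ Icc 1 (m ^ 2 / P) | p a} + (Nat.sqrt P + 1) := by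
  have hsplit : {n ∈ Icc m' m | p (n ^ 2 / P)} ⊆
      {n ∈ Icc m' m | P ≤ n ^ 2 ∧ p (n ^ 2 / P)} ∪ range (Nat.sqrt P + 1) := by
    intro n hn
    simp only [mem_union, mem_filter, mem_range, Nat.lt_succ_iff, Nat.le_sqrt'] at hn ⊢
    by_cases h : P ≤ n ^ 2
    · exact .inl ⟨hn.1, h, hn.2⟩
    · exact .inr (by nlinarith)
  have hmaps : ∀ n ∈ {n ∈ Icc m' m | P ≤ n ^ 2 ∧ p (n ^ 2 / P)},
      n ^ 2 / P ∈ {a ∈ Icc 1 (m ^ 2 / P) | p a} := by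
    intro n hn
    simp only [mem_filter, mem_Icc] at hn ⊢
    exact ⟨⟨Nat.div_pos hn.2.1 hP, Nat.div_le_div_right (Nat.pow_le_pow_left hn.1.2 2)⟩, hn.2.2⟩
  have hfibers : ∀ b ∈ {a ∈ Icc 1 (m ^ 2 / P) | p a},
      #{n ∈ {n ∈ Icc m' m | P ≤ n ^ 2 ∧ p (n ^ 2 / P)} | n ^ 2 / P = b} ≤
        P / (2 * max m' (Nat.sqrt P)) + 1 := by
    refine fun b _ => card_le_of_sq_div_eq (b := b) hP (lt_max_of_lt_right (Nat.sqrt_pos.2 hP))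
      fun n hn => ?_
    simp only [mem_filter, mem_Icc] at hn
    exact ⟨max_le hn.1.1.1 ((Nat.sqrt_le_sqrt hn.1.2.1).trans_eq (Nat.sqrt_eq' n)), hn.2⟩
  calc _ ≤ _ := card_le_card hsplit
    _ ≤ _ := card_union_le _ _
    _ ≤ _ := by
      rw [card_range]
      exact Nat.add_le_add_right (card_le_mul_card_image_of_maps_to hmaps _ hfibers) _

lemma card_filter_sq_div_halfDigitPow_sq_le (p : ℕ → Prop) [DecidablePred p] {g : ℕ} (hg : 1 < g)
    {δ : ℝ} (hδ : 0 ≤ δ) {m : ℕ} (hm : m ≠ 0)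
    (hB : (#{a ∈ Icc 1 (g * m) | p a} : ℝ) ≤ ((g * m : ℕ) : ℝ) ^ (1 - δ)) :
    (#{n ∈ Icc ⌊(m : ℝ) ^ (1 - δ / 2)⌋₊ m | p (n ^ 2 / halfDigitPow g (m ^ 2))} : ℝ) ≤
      g ^ 2 * (m : ℝ) ^ (1 - δ / 2) + g * (m : ℝ) ^ (1 - δ) + (√g + 1) * √m := by
  set P := halfDigitPow g (m ^ 2)
  set m' := ⌊(m : ℝ) ^ (1 - δ / 2)⌋₊
  set N := max m' (Nat.sqrt P)
  set B := #{a ∈ Icc 1 (g * m) | p a}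
  have hP : 0 < P := Nat.pow_pos (by omega)
  have hmR : (1 : ℝ) ≤ m := by exact_mod_cast Nat.one_le_iff_ne_zero.2 hm
  have hgR : (1 : ℝ) ≤ g := by exact_mod_cast hg.le
  have hPR : (P : ℝ) ≤ g * m := by exact_mod_cast halfDigitPow_sq_le hg hm
  have hcount : #{n ∈ Icc m' m | p (n ^ 2 / P)} ≤ (P / (2 * N) + 1) * B + (Nat.sqrt P + 1) :=
    (card_filter_sq_div_le p hP m' m).trans <| Nat.add_le_add_right (Nat.mul_le_mul_left _ <|
      card_le_card <| filter_subset_filter _ <| Icc_subset_Icc le_rfl <|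
        sq_div_halfDigitPow_sq_le hg m) _
  have hBR : (B : ℝ) ≤ g * (m : ℝ) ^ (1 - δ) := by
    refine hB.trans ?_
    rw [Nat.cast_mul, Real.mul_rpow (by positivity) (by positivity)]
    gcongr
    exact Real.rpow_le_self_of_one_le hgR (by linarith)
  have hN : (m : ℝ) ^ (1 - δ / 2) < 2 * N := by
    have hm' : (m' : ℝ) ≤ N := by exact_mod_cast le_max_left _ _
    have hN1 : (1 : ℝ) ≤ N := by exact_mod_cast le_max_of_le_right (Nat.sqrt_pos.2 hP)
    linarith [Nat.lt_floor_add_one ((m : ℝ) ^ (1 - δ / 2))]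
  have hDR : ((P / (2 * N) : ℕ) : ℝ) ≤ g * (m : ℝ) ^ (δ / 2) :=
    calc ((P / (2 * N) : ℕ) : ℝ) ≤ P / (2 * N) := by exact_mod_cast Nat.cast_div_le
      _ ≤ g * m / (m : ℝ) ^ (1 - δ / 2) := div_le_div₀ (by positivity) hPR (by positivity) hN.le
      _ = g * (m : ℝ) ^ (δ / 2) := by
        rw [div_eq_iff (by positivity), mul_assoc, ← Real.rpow_add (by positivity)]
        norm_num
  have hsqrtR : (Nat.sqrt P : ℝ) + 1 ≤ (√g + 1) * √m := by
    have : (Nat.sqrt P : ℝ) ≤ √g * √m := by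
      rw [← Real.sqrt_mul (by positivity), Real.le_sqrt (by positivity) (by positivity)]
      exact (by exact_mod_cast Nat.sqrt_le' P : ((Nat.sqrt P : ℕ) : ℝ) ^ 2 ≤ P).trans hPR
    nlinarith [Real.one_le_sqrt.2 hmR]
  have hexp : (m : ℝ) ^ (δ / 2) * (m : ℝ) ^ (1 - δ) = (m : ℝ) ^ (1 - δ / 2) := by
    rw [← Real.rpow_add (by positivity)]; ring_nf
  calc (#{n ∈ Icc m' m | p (n ^ 2 / P)} : ℝ)
      ≤ (((P / (2 * N) : ℕ) : ℝ) + 1) * B + ((Nat.sqrt P : ℝ) + 1) := by exact_mod_cast hcount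
    _ ≤ (g * (m : ℝ) ^ (δ / 2) + 1) * (g * (m : ℝ) ^ (1 - δ)) + (√g + 1) * √m := by
      gcongr
    _ = _ := by rw [← hexp]; ring

lemma isLittleO_natCast_rpow_self {s : ℝ} (hs : s < 1) :
    (fun m : ℕ => (m : ℝ) ^ s) =o[atTop] fun m : ℕ => (m : ℝ) := by
  refine (isLittleO_iff_tendsto' ?_).2 ?_
  · filter_upwards [eventually_ne_atTop 0] with m hm h
    exact absurd h (by positivity)
  · refine ((tendsto_rpow_neg_atTop (by linarith : 0 < 1 - s)).comp
      tendsto_natCast_atTop_atTop).congr' ?_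
    filter_upwards [eventually_ne_atTop 0] with m hm
    rw [Function.comp_apply, neg_sub, Real.rpow_sub (by positivity), Real.rpow_one]

open scoped Classical in
theorem first_half_of_squares_normal_general (g : ℕ) (hg : 2 ≤ g) (ε : ℝ) (k : ℕ)
    (δ : ℝ) (hδ : 0 < δ)
    (hCE : ∀ᶠ m : ℕ in atTop,
      (((Finset.Icc 1 m).filter fun a => ¬ EKNormalInt g ε k a).card : ℝ)
        ≤ (m : ℝ) ^ (1 - δ)) :
    (fun m : ℕ =>
        (((Finset.Icc ⌊(m : ℝ) ^ (1 - δ / 2)⌋₊ m).filter fun n =>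
            ¬ EKNormalInt g ε k (n ^ 2 / g ^ ((Nat.log g (m ^ 2) + 1) / 2))).card : ℝ))
      =o[atTop] fun m : ℕ => (m : ℝ) := by
  have hgm : Tendsto (fun m : ℕ => g * m) atTop atTop := tendsto_id.const_mul_atTop' (by omega)
  have hbound : (fun m : ℕ => (g : ℝ) ^ 2 * (m : ℝ) ^ (1 - δ / 2) + g * (m : ℝ) ^ (1 - δ) +
      (√g + 1) * (m : ℝ) ^ (1 / 2 : ℝ)) =o[atTop] fun m : ℕ => (m : ℝ) :=
    (((isLittleO_natCast_rpow_self (by linarith)).const_mul_left _).add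
      ((isLittleO_natCast_rpow_self (by linarith)).const_mul_left _)).add
      ((isLittleO_natCast_rpow_self (by norm_num)).const_mul_left _)
  refine (IsBigO.of_bound' ?_).trans_isLittleO hbound
  filter_upwards [hgm.eventually hCE, eventually_ne_atTop 0] with m hB hm
  rw [Real.norm_of_nonneg (by positivity), Real.norm_of_nonneg (by positivity),
    ← Real.sqrt_eq_rpow, show g ^ ((Nat.log g (m ^ 2) + 1) / 2) = halfDigitPow g (m ^ 2) from rfl]
  exact card_filter_sq_div_halfDigitPow_sq_le (fun a => ¬ EKNormalInt g ε k a) hg hδ.le hm hB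

open scoped Classical in
/-- The first half `b(n,m) = ⌊n²/g^ℓ⌋` of the digits of `n²` (for `n ∈ [m', m]`, where
`m' = ⌊m^{1−δ/2}⌋` and `ℓ = ⌊L(m²)/2⌋`) is `(ε,k)`-normal with `o(m)` exceptions. -/
theorem first_half_of_squares_normal (g : ℕ) (hg : 2 ≤ g) (ε : ℝ) (hε : 0 < ε) (k : ℕ)
    (δ : ℝ) (hδ : 0 < δ)
    (hCE : ∀ᶠ m : ℕ in atTop,
      (((Finset.Icc 1 m).filter fun a => ¬ EKNormalInt g ε k a).card : ℝ)
        ≤ (m : ℝ) ^ (1 - δ)) :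
    (fun m : ℕ =>
        (((Finset.Icc ⌊(m : ℝ) ^ (1 - δ / 2)⌋₊ m).filter fun n =>
            ¬ EKNormalInt g ε k (n ^ 2 / g ^ ((Nat.log g (m ^ 2) + 1) / 2))).card : ℝ))
      =o[atTop] fun m : ℕ => (m : ℝ) :=
  first_half_of_squares_normal_general g hg ε k δ hδ hCE
end

section
/- Fix an integer base g ≥ 2 and a real δ with 0 < δ < 1. For a positive integer m, set m' = ⌊m^{1−δ/2}⌋, ℓ = ⌊(⌊log_g m²⌋ + 1)/2⌋, and b(n) = ⌊n²/g^ℓ⌋. Then for all sufficiently large m: for every integer value v, the number of integers n ∈ [m', m] with b(n) = v is at most m^{3δ/4}. -/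
open Filter

/-- Counting lemma: the number of `n ∈ [a, m]` with `n² / G = v` (nat division) is at most
`(G-1)/(2a) + 1`. -/
lemma value_count_le (G a m v : ℕ) (hG : 1 ≤ G) (ha : 1 ≤ a) :
    ((Finset.Icc a m).filter fun n => n ^ 2 / G = v).card ≤ (G - 1) / (2 * a) + 1 := by
  set S := (Finset.Icc a m).filter fun n => n ^ 2 / G = v with hS
  rcases S.eq_empty_or_nonempty with h | hne
  · simp [h]
  · set c := S.min' hne with hc
    have hcmem : c ∈ S := S.min'_mem hne
    have hcIcc : a ≤ c := (Finset.mem_Icc.mp (Finset.mem_filter.mp hcmem).1).1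
    have hcv : c ^ 2 / G = v := (Finset.mem_filter.mp hcmem).2
    have hcsq : v * G ≤ c ^ 2 := by
      calc v * G = c ^ 2 / G * G := by rw [hcv]
        _ ≤ c ^ 2 := Nat.div_mul_le_self _ _
    have key : S ⊆ Finset.Icc c (c + (G - 1) / (2 * a)) := by
      intro n hn
      have hnIcc := Finset.mem_Icc.mp (Finset.mem_filter.mp hn).1
      have hnv : n ^ 2 / G = v := (Finset.mem_filter.mp hn).2
      have hcn : c ≤ n := S.min'_le n hn
      have hnsq : n ^ 2 < v * G + G := by
        have : n ^ 2 / G < v + 1 := by omega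
        have := (Nat.div_lt_iff_lt_mul (by omega : 0 < G)).mp this
        nlinarith
      have hdiff : n ^ 2 - c ^ 2 ≤ G - 1 := by omega
      have heq : (n - c) * (n + c) = n ^ 2 - c ^ 2 := by
        have h1 : (n - c) * (n + c) + c ^ 2 = n ^ 2 := by
          rw [Nat.sub_mul]
          have : c * (n + c) ≤ n * (n + c) := Nat.mul_le_mul_right _ hcn
          nlinarith [Nat.sub_add_cancel this]
        omega
      have h2a : 2 * a ≤ n + c := by omega
      have hmul : (n - c) * (2 * a) ≤ G - 1 := by
        calc (n - c) * (2 * a) ≤ (n - c) * (n + c) := Nat.mul_le_mul_left _ h2a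
          _ = n ^ 2 - c ^ 2 := heq
          _ ≤ G - 1 := hdiff
      have : n - c ≤ (G - 1) / (2 * a) :=
        (Nat.le_div_iff_mul_le (by omega : 0 < 2 * a)).mpr hmul
      exact Finset.mem_Icc.mpr ⟨hcn, by omega⟩
    calc S.card ≤ (Finset.Icc c (c + (G - 1) / (2 * a))).card := Finset.card_le_card key
      _ = (G - 1) / (2 * a) + 1 := by
          rw [Nat.card_Icc, Nat.add_assoc, Nat.add_sub_cancel_left]

/-- For sufficiently large `m`: each value `v` is taken by `b(n) = ⌊n²/g^ℓ⌋` for at most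
`m^{3δ/4}` integers `n ∈ [m', m]`, where `m' = ⌊m^{1−δ/2}⌋` and
`ℓ = ⌊(⌊log_g m²⌋ + 1)/2⌋`. -/
theorem first_half_value_multiplicity (g : ℕ) (hg : 2 ≤ g) (δ : ℝ) (hδ0 : 0 < δ)
    (hδ1 : δ < 1) :
    ∀ᶠ m : ℕ in atTop, ∀ v : ℕ,
      ((((Finset.Icc ⌊(m : ℝ) ^ (1 - δ / 2)⌋₊ m).filter
          fun n => n ^ 2 / g ^ ((Nat.log g (m ^ 2) + 1) / 2) = v).card : ℝ))
        ≤ (m : ℝ) ^ (3 * δ / 4) := by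
  have tend : ∀ e : ℝ, 0 < e → Tendsto (fun m : ℕ => (m : ℝ) ^ e) atTop atTop :=
    fun e he => (tendsto_rpow_atTop he).comp tendsto_natCast_atTop_atTop
  have h1 : ∀ᶠ m : ℕ in atTop, 2 ≤ (m : ℝ) ^ (1 - δ / 2) :=
    (tend _ (by linarith)).eventually_ge_atTop 2
  have h2 : ∀ᶠ m : ℕ in atTop, Real.sqrt g + 1 ≤ (m : ℝ) ^ (δ / 4) :=
    (tend _ (by linarith)).eventually_ge_atTop _
  filter_upwards [h1, h2, eventually_ge_atTop 1] with m hm1 hm2 hm3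
  intro v
  set a := ⌊(m : ℝ) ^ (1 - δ / 2)⌋₊ with hadef
  set ℓ := (Nat.log g (m ^ 2) + 1) / 2 with hℓ
  set G := g ^ ℓ with hGdef
  have hmR : (1 : ℝ) ≤ (m : ℝ) := by exact_mod_cast hm3
  have hmpos : (0 : ℝ) < m := by linarith
  have hG1 : 1 ≤ G := Nat.one_le_pow _ _ (by omega)
  have ha1 : 1 ≤ a := Nat.le_floor (by linarith)
  have hax : ((m : ℝ) ^ (1 - δ / 2)) / 2 ≤ (a : ℝ) := by
    have := Nat.sub_one_lt_floor ((m : ℝ) ^ (1 - δ / 2))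
    rw [← hadef] at this
    linarith
  -- bound G ≤ √g * m
  have hGsq : (G : ℝ) ^ 2 ≤ (g : ℝ) * (m : ℝ) ^ 2 := by
    have hL : g ^ Nat.log g (m ^ 2) ≤ m ^ 2 :=
      Nat.pow_log_le_self g (by positivity)
    have h2ℓ : 2 * ℓ ≤ Nat.log g (m ^ 2) + 1 := by omega
    have : G ^ 2 ≤ g * m ^ 2 := by
      calc G ^ 2 = g ^ (2 * ℓ) := by rw [hGdef, ← pow_mul, Nat.mul_comm]
        _ ≤ g ^ (Nat.log g (m ^ 2) + 1) := Nat.pow_le_pow_right (by omega) h2ℓ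
        _ = g * g ^ Nat.log g (m ^ 2) := by ring
        _ ≤ g * m ^ 2 := Nat.mul_le_mul_left _ hL
    exact_mod_cast this
  have hGle : (G : ℝ) ≤ Real.sqrt g * m := by
    have h : (G : ℝ) ≤ Real.sqrt ((g : ℝ) * (m : ℝ) ^ 2) := by
      have := Real.sqrt_le_sqrt hGsq
      rwa [Real.sqrt_sq (by positivity : (0:ℝ) ≤ (G:ℝ))] at this
    rwa [Real.sqrt_mul (by positivity), Real.sqrt_sq (by positivity)] at h
  -- counting bound
  have hcount := value_count_le G a m v hG1 ha1
  have hcastdiv : (((G - 1) / (2 * a) : ℕ) : ℝ) ≤ (G : ℝ) / (2 * a) := by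
    refine Nat.cast_div_le.trans ?_
    have hle : ((G - 1 : ℕ) : ℝ) ≤ (G : ℝ) := by exact_mod_cast Nat.sub_le G 1
    have h2a : (0:ℝ) < ((2 * a : ℕ) : ℝ) := by positivity
    calc ((G - 1 : ℕ) : ℝ) / ((2 * a : ℕ) : ℝ) ≤ (G : ℝ) / ((2 * a : ℕ) : ℝ) := by
          gcongr
      _ = (G : ℝ) / (2 * a) := by push_cast; ring_nf
  have hcard : ((((Finset.Icc a m).filter fun n => n ^ 2 / G = v).card : ℝ))
      ≤ (G : ℝ) / (2 * a) + 1 := by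
    have := hcount
    have : ((((Finset.Icc a m).filter fun n => n ^ 2 / G = v).card : ℝ))
        ≤ (((G - 1) / (2 * a) + 1 : ℕ) : ℝ) := by exact_mod_cast this
    push_cast at this ⊢
    calc ((((Finset.Icc a m).filter fun n => n ^ 2 / G = v).card : ℝ))
        ≤ (((G - 1) / (2 * a) : ℕ) : ℝ) + 1 := by exact_mod_cast hcount
      _ ≤ (G : ℝ) / (2 * a) + 1 := by linarith [hcastdiv]
  -- now the real estimate
  have hxpos : (0 : ℝ) < (m : ℝ) ^ (1 - δ / 2) := by positivity
  have hdiv : (G : ℝ) / (2 * a) ≤ (Real.sqrt g * m) / ((m : ℝ) ^ (1 - δ / 2)) := by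
    apply div_le_div₀ (by positivity) hGle hxpos
    linarith
  have hmsplit : (m : ℝ) ^ (δ / 2) * (m : ℝ) ^ (1 - δ / 2) = m := by
    rw [← Real.rpow_add hmpos]
    norm_num
  have hdiv2 : (Real.sqrt g * m) / ((m : ℝ) ^ (1 - δ / 2))
      = Real.sqrt g * (m : ℝ) ^ (δ / 2) := by
    rw [eq_comm, eq_div_iff (ne_of_gt hxpos), mul_assoc, hmsplit]
  have hone : (1 : ℝ) ≤ (m : ℝ) ^ (δ / 2) := Real.one_le_rpow hmR (by linarith)
  have hfinal : Real.sqrt g * (m : ℝ) ^ (δ / 2) + 1 ≤ (m : ℝ) ^ (3 * δ / 4) := by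
    have hsplit : (m : ℝ) ^ (3 * δ / 4) = (m : ℝ) ^ (δ / 2) * (m : ℝ) ^ (δ / 4) := by
      rw [← Real.rpow_add hmpos]; ring_nf
    rw [hsplit]
    have : (m : ℝ) ^ (δ / 2) * (Real.sqrt g + 1) ≤ (m : ℝ) ^ (δ / 2) * (m : ℝ) ^ (δ / 4) :=
      mul_le_mul_of_nonneg_left hm2 (by positivity)
    nlinarith [Real.sqrt_nonneg (g : ℝ)]
  calc ((((Finset.Icc a m).filter fun n => n ^ 2 / G = v).card : ℝ))
      ≤ (G : ℝ) / (2 * a) + 1 := hcard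
    _ ≤ Real.sqrt g * (m : ℝ) ^ (δ / 2) + 1 := by rw [← hdiv2]; linarith
    _ ≤ (m : ℝ) ^ (3 * δ / 4) := hfinal
end
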